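/- arXiv:1106.1623 — 4 statements merged into one kernel-verified Lean document; each statement's English description precedes it below -/
import Mathlib

section
/- Let $Y \subset \mathbb{R}^{k+1}$ be the region $\{(x,t) \mid x \in \Delta_k^\lambda, \ 0 \leq t \leq h - \sum_{i=1}^k a_i x_i\}$ with $h > \lambda \cdot \max(0,a_1,\ldots,a_k)$ and $\lambda > 0$. Then for each $j \in \{1,\ldots,k\}$, the first moment $\mu_j = \int_Y x_j$ equals $\frac{(k+2) h \lambda^{k+1} - (a_j + \sum_{i=1}^k a_i)\lambda^{k+2}}{(k+2)!}$, and hence the $j$-th coordinate of the center of mass of $Y$ is $\frac{\lambda}{k+2} \cdot \frac{h(k+2) - \lambda(a_j + \sum_{i=1}^k a_i)}{h(k+1) - \lambda \sum_{i=1}^k a_i}$. -/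
open MeasureTheory

/-- The region `Y = {(x,t) | x ∈ Δ_k^λ, 0 ≤ t ≤ h - ∑ aᵢ xᵢ}`. -/
def Ybundle (k : ℕ) (a : Fin k → ℝ) (lam h : ℝ) : Set ((Fin k → ℝ) × ℝ) :=
  {p | (∀ j, 0 ≤ p.1 j) ∧ (∑ j, p.1 j) ≤ lam ∧
    0 ≤ p.2 ∧ p.2 ≤ h - ∑ i, a i * p.1 i}


def Sx (k : ℕ) (lam : ℝ) : Set (Fin k → ℝ) := {x | (∀ j, 0 ≤ x j) ∧ ∑ j, x j ≤ lam}

lemma Sx_subset_Icc (k : ℕ) (lam : ℝ) : Sx k lam ⊆ Set.Icc 0 (fun _ => lam) := by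
  rintro x ⟨h1, h2⟩
  refine ⟨fun j => h1 j, fun j => ?_⟩
  calc x j ≤ ∑ i, x i := Finset.single_le_sum (fun i _ => h1 i) (Finset.mem_univ j)
    _ ≤ lam := h2

lemma isClosed_Sx (k : ℕ) (lam : ℝ) : IsClosed (Sx k lam) := by
  have h1 : IsClosed {x : Fin k → ℝ | ∀ j, 0 ≤ x j} := by
    have : {x : Fin k → ℝ | ∀ j, 0 ≤ x j} = ⋂ j, {x | 0 ≤ x j} := by
      ext x; simp
    rw [this]
    exact isClosed_iInter fun j => isClosed_le continuous_const (continuous_apply j)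
  have h2 : IsClosed {x : Fin k → ℝ | ∑ j, x j ≤ lam} :=
    isClosed_le (by continuity) continuous_const
  exact h1.inter h2

lemma isCompact_Sx (k : ℕ) (lam : ℝ) : IsCompact (Sx k lam) :=
  (isCompact_Icc).of_isClosed_subset (isClosed_Sx k lam) (Sx_subset_Icc k lam)

lemma measurableSet_Sx (k : ℕ) (lam : ℝ) : MeasurableSet (Sx k lam) :=
  (isClosed_Sx k lam).measurableSet

lemma integrableOn_Sx {k : ℕ} {lam : ℝ} {f : (Fin k → ℝ) → ℝ} (hf : Continuous f) :
    IntegrableOn f (Sx k lam) :=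
  hf.continuousOn.integrableOn_compact (isCompact_Sx k lam)

lemma Sx_neg (k : ℕ) {lam : ℝ} (h : lam < 0) : Sx k lam = ∅ := by
  ext x
  simp only [Sx, Set.mem_setOf_eq, Set.mem_empty_iff_false, iff_false, not_and]
  intro h1 h2
  exact absurd h2 (not_le.2 (lt_of_lt_of_le h (Finset.sum_nonneg fun i _ => h1 i)))

lemma cons_preimage_Sx (k : ℕ) (lam t : ℝ) :
    (fun y : Fin k → ℝ => Fin.cons t y) ⁻¹' Sx (k+1) lam
      = if 0 ≤ t then Sx k (lam - t) else ∅ := by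
  ext y
  simp only [Sx, Set.mem_preimage, Set.mem_setOf_eq, Fin.forall_fin_succ, Fin.cons_zero,
    Fin.cons_succ, Fin.sum_cons]
  split_ifs with ht
  · simp only [Set.mem_setOf_eq]
    constructor
    · rintro ⟨⟨_, h1⟩, h2⟩; exact ⟨h1, by linarith⟩
    · rintro ⟨h1, h2⟩; exact ⟨⟨ht, h1⟩, by linarith⟩
  · simp only [Set.mem_empty_iff_false, iff_false, not_and]
    rintro ⟨h0, _⟩ _; exact ht h0

lemma measurable_cons (k : ℕ) (t : ℝ) :
    Measurable (fun y : Fin k → ℝ => (Fin.cons t y : Fin (k+1) → ℝ)) := by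
  rw [measurable_pi_iff]
  intro i
  refine Fin.cases ?_ ?_ i
  · simpa using measurable_const
  · intro j; simpa using measurable_pi_apply j



lemma full_slice (k : ℕ) (F : (Fin (k+1) → ℝ) → ℝ) (hF : Integrable F) :
    ∫ x, F x = ∫ t : ℝ, ∫ y : Fin k → ℝ, F (Fin.cons t y) := by
  rw [← ((volume_preserving_piFinSuccAbove (fun _ : Fin (k+1) => ℝ) 0).symm).integral_comp']
  have hI : Integrable (fun z : ℝ × (Fin k → ℝ) =>
      F ((MeasurableEquiv.piFinSuccAbove (fun _ : Fin (k+1) => ℝ) 0).symm z))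
      ((volume : Measure ℝ).prod volume) := by
    have := (((volume_preserving_piFinSuccAbove (fun _ : Fin (k+1) => ℝ) 0).symm).integrable_comp_emb
      (MeasurableEquiv.measurableEmbedding _)).2 hF
    rw [Measure.volume_eq_prod] at this
    exact this
  rw [show (volume : Measure (ℝ × (Fin k → ℝ))) = (volume : Measure ℝ).prod volume from rfl,
     integral_prod _ hI]
  congr 1; ext t; congr 1; ext y
  simp [MeasurableEquiv.piFinSuccAbove_symm_apply, Fin.insertNthEquiv, Fin.insertNth_zero]

lemma sliceSx (k : ℕ) (lam : ℝ) (f : (Fin (k+1) → ℝ) → ℝ) (hf : Continuous f) :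
    ∫ x in Sx (k+1) lam, f x
      = ∫ t in Set.Ioc (0:ℝ) lam, ∫ y in Sx k (lam - t), f (Fin.cons t y) := by
  have hF : Integrable ((Sx (k+1) lam).indicator f) :=
    (integrable_indicator_iff (measurableSet_Sx _ _)).2 (integrableOn_Sx hf)
  have key : ∀ t : ℝ, ∫ y : Fin k → ℝ, (Sx (k+1) lam).indicator f (Fin.cons t y)
      = if 0 ≤ t then ∫ y in Sx k (lam - t), f (Fin.cons t y) else 0 := by
    intro t
    have : ∀ y : Fin k → ℝ, (Sx (k+1) lam).indicator f (Fin.cons t y)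
        = ((fun y : Fin k → ℝ => Fin.cons t y) ⁻¹' Sx (k+1) lam).indicator
            (fun y => f (Fin.cons t y)) y := by
      intro y
      simp only [Set.indicator, Set.mem_preimage]
      rfl
    simp_rw [this, cons_preimage_Sx]
    split_ifs with ht
    · exact integral_indicator ((measurableSet_Sx _ _))
    · simp
  rw [← integral_indicator (measurableSet_Sx _ _), full_slice k _ hF]
  simp_rw [key]
  rw [show (∫ t : ℝ, if 0 ≤ t then ∫ y in Sx k (lam - t), f (Fin.cons t y) else 0)
      = ∫ t in Set.Icc (0:ℝ) lam, (if 0 ≤ t then ∫ y in Sx k (lam - t), f (Fin.cons t y) else 0)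
      from (setIntegral_eq_integral_of_forall_compl_eq_zero ?_).symm]
  · rw [integral_Icc_eq_integral_Ioc]
    refine setIntegral_congr_fun measurableSet_Ioc (fun t ht => ?_)
    rw [if_pos ht.1.le]
  · intro t ht
    simp only [Set.mem_Icc, not_and, not_le] at ht
    split_ifs with h
    · rw [Sx_neg k (by linarith [ht h]), Measure.restrict_empty, integral_zero_measure]
    · rfl


lemma Jn (n : ℕ) (lam : ℝ) : ∫ t in (0:ℝ)..lam, (lam - t)^n = lam^(n+1)/(n+1) := by
  have := intervalIntegral.integral_comp_sub_left (a := (0:ℝ)) (b := lam) (fun x => x^n) lam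
  simp only [sub_self, sub_zero] at this
  rw [this, integral_pow]
  simp

lemma Jn1 (n : ℕ) (lam : ℝ) :
    ∫ t in (0:ℝ)..lam, t * (lam - t)^n = lam^(n+2)/((n+1)*(n+2)) := by
  have h : ∀ t : ℝ, t * (lam - t)^n = lam * (lam - t)^n - (lam - t)^(n+1) := by
    intro t; ring
  rw [intervalIntegral.integral_congr (fun t _ => h t)]
  rw [intervalIntegral.integral_sub (by apply Continuous.intervalIntegrable; fun_prop) (by apply Continuous.intervalIntegrable; fun_prop),
    intervalIntegral.integral_const_mul, Jn, Jn]
  have h1 : (n:ℝ)+1 ≠ 0 := by positivity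
  have h2 : (n:ℝ)+2 ≠ 0 := by positivity
  field_simp
  push_cast; ring

lemma Jn2 (n : ℕ) (lam : ℝ) :
    ∫ t in (0:ℝ)..lam, t^2 * (lam - t)^n
      = 2*lam^(n+3)/((n+1)*(n+2)*(n+3)) := by
  have h : ∀ t : ℝ, t^2 * (lam - t)^n
      = lam^2 * (lam - t)^n - 2*lam*(lam - t)^(n+1) + (lam - t)^(n+2) := by
    intro t; ring
  rw [intervalIntegral.integral_congr (fun t _ => h t)]
  rw [intervalIntegral.integral_add (by apply Continuous.intervalIntegrable; fun_prop) (by apply Continuous.intervalIntegrable; fun_prop),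
    intervalIntegral.integral_sub (by apply Continuous.intervalIntegrable; fun_prop) (by apply Continuous.intervalIntegrable; fun_prop),
    intervalIntegral.integral_const_mul, intervalIntegral.integral_const_mul, Jn, Jn, Jn]
  have h1 : (n:ℝ)+1 ≠ 0 := by positivity
  have h2 : (n:ℝ)+2 ≠ 0 := by positivity
  have h3 : (n:ℝ)+3 ≠ 0 := by positivity
  push_cast
  field_simp
  ring

lemma Sx_zero (lam : ℝ) (h : 0 ≤ lam) : Sx 0 lam = Set.univ := by
  ext x
  simp [Sx, h]

lemma int_one : ∀ (k : ℕ) (lam : ℝ), 0 ≤ lam →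
    ∫ x in Sx k lam, (1:ℝ) = lam^k / (Nat.factorial k) := by
  intro k
  induction k with
  | zero =>
    intro lam h
    rw [Sx_zero lam h, Measure.restrict_univ]
    simp only [integral_const, smul_eq_mul, mul_one, pow_zero, Nat.factorial_zero,
      Nat.cast_one, div_one]
    rw [MeasureTheory.volume_pi, measureReal_def, MeasureTheory.Measure.pi_empty_univ]
    simp
  | succ k ih =>
    intro lam h
    rw [sliceSx k lam _ continuous_const,
      setIntegral_congr_fun measurableSet_Ioc
        (g := fun t => (lam - t)^k / (Nat.factorial k))
        (fun t ht => ih (lam - t) (by simp only [Set.mem_Ioc] at ht; linarith [ht.2])),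
      ← intervalIntegral.integral_of_le h, intervalIntegral.integral_div, Jn, div_div,
      Nat.factorial_succ]
    congr 1
    push_cast
    ring

lemma vol_Sx (k : ℕ) (lam : ℝ) (h : 0 ≤ lam) :
    (volume (Sx k lam)).toReal = lam^k / (Nat.factorial k) := by
  have := int_one k lam h
  rwa [setIntegral_const, smul_eq_mul, mul_one] at this

lemma int_coord : ∀ (k : ℕ) (lam : ℝ), 0 ≤ lam → ∀ j : Fin k,
    ∫ x in Sx k lam, x j = lam^(k+1) / (Nat.factorial (k+1)) := by
  intro k
  induction k with
  | zero => intro lam _ j; exact j.elim0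
  | succ k ih =>
    intro lam h j
    induction j using Fin.cases with
    | zero =>
      have step : ∀ t ∈ Set.Ioc (0:ℝ) lam,
          (∫ y in Sx k (lam - t), (Fin.cons t y : Fin (k+1) → ℝ) 0)
            = t * (lam - t)^k / (Nat.factorial k) := by
        intro t ht
        simp only [Set.mem_Ioc] at ht
        simp only [Fin.cons_zero]
        rw [setIntegral_const, smul_eq_mul, measureReal_def, vol_Sx k _ (by linarith [ht.2])]
        ring
      rw [sliceSx k lam _ (continuous_apply 0), setIntegral_congr_fun measurableSet_Ioc step,
        ← intervalIntegral.integral_of_le h]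
      rw [intervalIntegral.integral_div, Jn1, div_div, show k+1+1 = k+2 from rfl, Nat.factorial_succ, Nat.factorial_succ]
      congr 1
      push_cast
      ring
    | succ i =>
      have step : ∀ t ∈ Set.Ioc (0:ℝ) lam,
          (∫ y in Sx k (lam - t), (Fin.cons t y : Fin (k+1) → ℝ) i.succ)
            = (lam - t)^(k+1) / (Nat.factorial (k+1)) := by
        intro t ht
        simp only [Set.mem_Ioc] at ht
        simp only [Fin.cons_succ]
        exact ih (lam - t) (by linarith [ht.2]) i
      rw [sliceSx k lam _ (continuous_apply i.succ),
        setIntegral_congr_fun measurableSet_Ioc step,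
        ← intervalIntegral.integral_of_le h, intervalIntegral.integral_div, Jn, div_div,
        show k+1+1 = k+2 from rfl, Nat.factorial_succ (k+1)]
      congr 1
      push_cast
      ring

lemma int_coord2 : ∀ (k : ℕ) (lam : ℝ), 0 ≤ lam → ∀ i j : Fin k,
    ∫ x in Sx k lam, x i * x j
      = (if i = j then (2:ℝ) else 1) * lam^(k+2) / (Nat.factorial (k+2)) := by
  intro k
  induction k with
  | zero => intro lam _ i; exact i.elim0
  | succ k ih =>
    intro lam h i j
    have hfact : ∀ m : ℕ, ((Nat.factorial m : ℝ)) ≠ 0 := fun m => by positivity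
    induction i using Fin.cases with
    | zero =>
      induction j using Fin.cases with
      | zero =>
        have step : ∀ t ∈ Set.Ioc (0:ℝ) lam,
            (∫ y in Sx k (lam - t),
              (Fin.cons t y : Fin (k+1) → ℝ) 0 * (Fin.cons t y : Fin (k+1) → ℝ) 0)
              = t^2 * (lam - t)^k / (Nat.factorial k) := by
          intro t ht
          simp only [Set.mem_Ioc] at ht
          simp only [Fin.cons_zero]
          rw [setIntegral_const, smul_eq_mul, measureReal_def, vol_Sx k _ (by linarith [ht.2])]
          ring
        rw [sliceSx k lam (fun x => x 0 * x 0) ((continuous_apply 0).mul (continuous_apply 0)),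
          setIntegral_congr_fun measurableSet_Ioc step,
          ← intervalIntegral.integral_of_le h, intervalIntegral.integral_div, Jn2,
          if_pos rfl, div_div, show k+1+2 = k+3 from rfl,
          Nat.factorial_succ (k+2), Nat.factorial_succ (k+1), Nat.factorial_succ k]
        congr 1 <;> (push_cast; ring)
      | succ j' =>
        have step : ∀ t ∈ Set.Ioc (0:ℝ) lam,
            (∫ y in Sx k (lam - t),
              (Fin.cons t y : Fin (k+1) → ℝ) 0 * (Fin.cons t y : Fin (k+1) → ℝ) j'.succ)
              = t * (lam - t)^(k+1) / (Nat.factorial (k+1)) := by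
          intro t ht
          simp only [Set.mem_Ioc] at ht
          simp only [Fin.cons_zero, Fin.cons_succ]
          rw [MeasureTheory.integral_const_mul, int_coord k _ (by linarith [ht.2]) j']
          ring
        rw [sliceSx k lam (fun x => x 0 * x j'.succ) ((continuous_apply 0).mul (continuous_apply j'.succ)),
          setIntegral_congr_fun measurableSet_Ioc step,
          ← intervalIntegral.integral_of_le h, intervalIntegral.integral_div, Jn1,
          if_neg (Ne.symm (Fin.succ_ne_zero j')), div_div, show k+1+2 = k+3 from rfl,
          Nat.factorial_succ (k+2), Nat.factorial_succ (k+1)]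
        congr 1 <;> (push_cast; ring)
    | succ i' =>
      induction j using Fin.cases with
      | zero =>
        have step : ∀ t ∈ Set.Ioc (0:ℝ) lam,
            (∫ y in Sx k (lam - t),
              (Fin.cons t y : Fin (k+1) → ℝ) i'.succ * (Fin.cons t y : Fin (k+1) → ℝ) 0)
              = t * (lam - t)^(k+1) / (Nat.factorial (k+1)) := by
          intro t ht
          simp only [Set.mem_Ioc] at ht
          simp only [Fin.cons_zero, Fin.cons_succ]
          rw [MeasureTheory.integral_mul_const, int_coord k _ (by linarith [ht.2]) i']
          ring
        rw [sliceSx k lam (fun x => x i'.succ * x 0) ((continuous_apply i'.succ).mul (continuous_apply 0)),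
          setIntegral_congr_fun measurableSet_Ioc step,
          ← intervalIntegral.integral_of_le h, intervalIntegral.integral_div, Jn1,
          if_neg (Fin.succ_ne_zero i'), div_div, show k+1+2 = k+3 from rfl,
          Nat.factorial_succ (k+2), Nat.factorial_succ (k+1)]
        congr 1 <;> (push_cast; ring)
      | succ j' =>
        have step : ∀ t ∈ Set.Ioc (0:ℝ) lam,
            (∫ y in Sx k (lam - t),
              (Fin.cons t y : Fin (k+1) → ℝ) i'.succ * (Fin.cons t y : Fin (k+1) → ℝ) j'.succ)
              = (if i' = j' then (2:ℝ) else 1) * (lam - t)^(k+2) / (Nat.factorial (k+2)) := by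
          intro t ht
          simp only [Set.mem_Ioc] at ht
          simp only [Fin.cons_succ]
          exact ih (lam - t) (by linarith [ht.2]) i' j'
        rw [sliceSx k lam (fun x => x i'.succ * x j'.succ) ((continuous_apply i'.succ).mul (continuous_apply j'.succ)),
          setIntegral_congr_fun measurableSet_Ioc step,
          ← intervalIntegral.integral_of_le h]
        simp_rw [mul_div_assoc]
        rw [intervalIntegral.integral_const_mul, intervalIntegral.integral_div, Jn,
          show k+1+2 = k+3 from rfl, Nat.factorial_succ (k+2)]
        simp only [Fin.succ_inj]
        rw [div_div]
        congr 2
        push_cast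
        ring

lemma mem_Ybundle {k : ℕ} {a : Fin k → ℝ} {lam h : ℝ} (p : (Fin k → ℝ) × ℝ) :
    p ∈ Ybundle k a lam h ↔ p.1 ∈ Sx k lam ∧ p.2 ∈ Set.Icc 0 (h - ∑ i, a i * p.1 i) := by
  simp [Ybundle, Sx, Set.mem_Icc, and_assoc]

lemma isClosed_Ybundle (k : ℕ) (a : Fin k → ℝ) (lam h : ℝ) :
    IsClosed (Ybundle k a lam h) := by
  have : Ybundle k a lam h =
      (⋂ j, {p : (Fin k → ℝ) × ℝ | 0 ≤ p.1 j}) ∩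
        ({p : (Fin k → ℝ) × ℝ | ∑ j, p.1 j ≤ lam} ∩
          ({p : (Fin k → ℝ) × ℝ | 0 ≤ p.2} ∩
            {p : (Fin k → ℝ) × ℝ | p.2 ≤ h - ∑ i, a i * p.1 i})) := by
    ext p; simp [Ybundle]
  rw [this]
  have c1 : IsClosed (⋂ j, {p : (Fin k → ℝ) × ℝ | 0 ≤ p.1 j}) :=
    isClosed_iInter fun j => isClosed_le continuous_const (by fun_prop)
  have c2 : IsClosed {p : (Fin k → ℝ) × ℝ | ∑ j, p.1 j ≤ lam} :=
    isClosed_le (continuous_finset_sum _ fun i _ => by fun_prop) continuous_const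
  have c3 : IsClosed {p : (Fin k → ℝ) × ℝ | 0 ≤ p.2} :=
    isClosed_le continuous_const continuous_snd
  have c4 : IsClosed {p : (Fin k → ℝ) × ℝ | p.2 ≤ h - ∑ i, a i * p.1 i} :=
    isClosed_le continuous_snd
      (continuous_const.sub (continuous_finset_sum _ fun i _ => by fun_prop))
  exact c1.inter (c2.inter (c3.inter c4))

lemma isCompact_Ybundle (k : ℕ) (a : Fin k → ℝ) (lam h : ℝ) (hlam : 0 ≤ lam) :
    IsCompact (Ybundle k a lam h) := by
  refine IsCompact.of_isClosed_subset
    (s := (Set.Icc (0 : Fin k → ℝ) (fun _ => lam)) ×ˢ Set.Icc (0:ℝ) (h + ∑ i, |a i| * lam))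
    (isCompact_Icc.prod isCompact_Icc) (isClosed_Ybundle k a lam h) ?_
  · rintro ⟨x, t⟩ hp
    rw [mem_Ybundle] at hp
    obtain ⟨hx, ht⟩ := hp
    obtain ⟨ht0, ht1⟩ := ht
    have hxI := Sx_subset_Icc k lam hx
    refine Set.mem_prod.2 ⟨hxI, ht0, ?_⟩
    have : h - ∑ i, a i * x i ≤ h + ∑ i, |a i| * lam := by
      have : ∀ i ∈ Finset.univ, -(|a i| * lam) ≤ a i * x i := by
        intro i _
        have h1 : 0 ≤ x i := hxI.1 i
        have h2 : x i ≤ lam := hxI.2 i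
        calc -(|a i| * lam) ≤ -(|a i| * x i) := by nlinarith [abs_nonneg (a i)]
          _ ≤ a i * x i := by nlinarith [neg_abs_le (a i), abs_nonneg (a i)]
      have := Finset.sum_le_sum this
      simp only [Finset.sum_neg_distrib] at this
      linarith
    exact le_trans ht1 this

lemma measurableSet_Ybundle (k : ℕ) (a : Fin k → ℝ) (lam h : ℝ) :
    MeasurableSet (Ybundle k a lam h) := (isClosed_Ybundle k a lam h).measurableSet

lemma bundle_fubini (k : ℕ) (a : Fin k → ℝ) (lam h : ℝ) (hlam : 0 ≤ lam)
    (hg : ∀ x ∈ Sx k lam, 0 ≤ h - ∑ i, a i * x i)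
    (f : (Fin k → ℝ) → ℝ) (hf : Continuous f) :
    ∫ p in Ybundle k a lam h, f p.1
      = ∫ x in Sx k lam, f x * (h - ∑ i, a i * x i) := by
  have hY := measurableSet_Ybundle k a lam h
  have hInt : IntegrableOn (fun p : (Fin k → ℝ) × ℝ => f p.1) (Ybundle k a lam h) :=
    (hf.comp continuous_fst).continuousOn.integrableOn_compact (isCompact_Ybundle k a lam h hlam)
  have hI : Integrable ((Ybundle k a lam h).indicator (fun p => f p.1))
      ((volume : Measure (Fin k → ℝ)).prod (volume : Measure ℝ)) := by
    have := (integrable_indicator_iff hY).2 hInt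
    rwa [Measure.volume_eq_prod] at this
  rw [← integral_indicator hY,
    show (volume : Measure ((Fin k → ℝ) × ℝ)) = volume.prod volume from rfl,
    integral_prod _ hI]
  have inner : ∀ x : Fin k → ℝ,
      (∫ t : ℝ, (Ybundle k a lam h).indicator (fun p => f p.1) (x, t))
        = (Sx k lam).indicator (fun x => f x * (h - ∑ i, a i * x i)) x := by
    intro x
    by_cases hx : x ∈ Sx k lam
    · have e1 : ∀ t : ℝ, (Ybundle k a lam h).indicator (fun p => f p.1) (x, t)
          = (Set.Icc 0 (h - ∑ i, a i * x i)).indicator (fun _ => f x) t := by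
        intro t
        simp only [Set.indicator]
        by_cases hmem : (x, t) ∈ Ybundle k a lam h
        · rw [if_pos hmem, if_pos (((mem_Ybundle _).1 hmem).2)]
        · rw [if_neg hmem, if_neg (fun hc => hmem ((mem_Ybundle _).2 ⟨hx, hc⟩))]
      simp_rw [e1]
      rw [integral_indicator measurableSet_Icc, setIntegral_const, smul_eq_mul,
        measureReal_def, Real.volume_Icc, sub_zero, ENNReal.toReal_ofReal (hg x hx),
        Set.indicator_of_mem hx, mul_comm]
    · have e1 : ∀ t : ℝ, (Ybundle k a lam h).indicator (fun p => f p.1) (x, t) = 0 := by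
        intro t
        apply Set.indicator_of_notMem
        rw [mem_Ybundle]
        exact fun hc => hx hc.1
      simp_rw [e1, integral_zero, Set.indicator_of_notMem hx]
  simp_rw [inner]
  exact integral_indicator (measurableSet_Sx k lam)

/-- For `λ > 0` and `h > λ·max(0,a₁,…,a_k)` (expressed as `0 < h` and `λ·aᵢ < h` for all `i`),
the first moment `μⱼ = ∫_Y xⱼ` equals `((k+2)·h·λ^{k+1} - (aⱼ + ∑ aᵢ)·λ^{k+2}) / (k+2)!`,
and hence the `j`-th coordinate of the center of mass of `Y` equals
`(λ/(k+2)) · (h(k+2) - λ(aⱼ + ∑ aᵢ)) / (h(k+1) - λ ∑ aᵢ)`. -/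
theorem stmt2 (k : ℕ) (a : Fin k → ℝ) (lam h : ℝ) (hlam : 0 < lam)
    (hh : 0 < h) (hha : ∀ i, lam * a i < h) (j : Fin k) :
    (∫ p in Ybundle k a lam h, p.1 j) =
      (((k : ℝ) + 2) * h * lam ^ (k + 1) - (a j + ∑ i, a i) * lam ^ (k + 2)) /
        (Nat.factorial (k + 2) : ℝ) ∧
    (∫ p in Ybundle k a lam h, p.1 j) / (volume (Ybundle k a lam h)).toReal =
      lam / ((k : ℝ) + 2) *
        ((h * ((k : ℝ) + 2) - lam * (a j + ∑ i, a i)) /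
          (h * ((k : ℝ) + 1) - lam * ∑ i, a i)) := by
  have hlam' : 0 ≤ lam := hlam.le
  have hfac : ∀ m : ℕ, ((Nat.factorial m : ℝ)) ≠ 0 := fun m => by positivity
  have hk1 : ((k:ℝ)+1) ≠ 0 := by positivity
  have hk2 : ((k:ℝ)+2) ≠ 0 := by positivity
  -- nonnegativity of the height function on the simplex
  have hg : ∀ x ∈ Sx k lam, 0 ≤ h - ∑ i, a i * x i := by
    intro x hx
    obtain ⟨hx1, hx2⟩ := hx
    have hbound : ∀ i ∈ Finset.univ, a i * x i ≤ (h/lam) * x i := by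
      intro i _
      have hai : a i ≤ h / lam := (le_div_iff₀' hlam).2 (hha i).le
      exact mul_le_mul_of_nonneg_right hai (hx1 i)
    have h1 : ∑ i, a i * x i ≤ ∑ i, (h/lam) * x i := Finset.sum_le_sum hbound
    have h2 : ∑ i, (h/lam) * x i = (h/lam) * ∑ i, x i := (Finset.mul_sum _ _ _).symm
    have h3 : (h/lam) * ∑ i, x i ≤ (h/lam) * lam :=
      mul_le_mul_of_nonneg_left hx2 (by positivity)
    have h4 : (h/lam) * lam = h := div_mul_cancel₀ h hlam.ne'
    linarith
  -- the first moment
  have hmu0 : (∫ p in Ybundle k a lam h, p.1 j)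
      = ∫ x in Sx k lam, x j * (h - ∑ i, a i * x i) :=
    bundle_fubini k a lam h hlam' hg (fun x => x j) (continuous_apply j)
  have hexpand : ∀ x : Fin k → ℝ,
      x j * (h - ∑ i, a i * x i) = h * x j - ∑ i, a i * (x i * x j) := by
    intro x
    rw [mul_sub, Finset.mul_sum, mul_comm (x j) h]
    congr 1
    exact Finset.sum_congr rfl fun i _ => by ring
  have hmu1 : (∫ p in Ybundle k a lam h, p.1 j)
      = h * (lam^(k+1) / (Nat.factorial (k+1)))
        - (a j + ∑ i, a i) * lam^(k+2) / (Nat.factorial (k+2)) := by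
    rw [hmu0, setIntegral_congr_fun (measurableSet_Sx k lam) (fun x _ => hexpand x),
      integral_sub (integrableOn_Sx (by fun_prop))
        (integrableOn_Sx (continuous_finset_sum _ fun i _ => by fun_prop)),
      MeasureTheory.integral_const_mul,
      integral_finset_sum _ (fun i _ => (integrableOn_Sx (by fun_prop)))]
    simp_rw [MeasureTheory.integral_const_mul]
    rw [int_coord k lam hlam' j]
    have e : ∀ i : Fin k, a i * ∫ x in Sx k lam, x i * x j
        = (if i = j then a i * (lam^(k+2) / (Nat.factorial (k+2))) else 0)
          + a i * (lam^(k+2) / (Nat.factorial (k+2))) := by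
      intro i
      rw [int_coord2 k lam hlam' i j]
      split_ifs <;> ring
    simp_rw [e]
    rw [Finset.sum_add_distrib, Finset.sum_ite_eq' Finset.univ j, if_pos (Finset.mem_univ j),
      ← Finset.sum_mul]
    ring
  have hfirst : (∫ p in Ybundle k a lam h, p.1 j) =
      (((k : ℝ) + 2) * h * lam ^ (k + 1) - (a j + ∑ i, a i) * lam ^ (k + 2)) /
        (Nat.factorial (k + 2) : ℝ) := by
    rw [hmu1, show ((Nat.factorial (k+2) : ℝ)) = ((k:ℝ)+2) * (Nat.factorial (k+1)) by
      rw [Nat.factorial_succ (k+1)]; push_cast; ring]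
    field_simp
  refine ⟨hfirst, ?_⟩
  -- the volume
  have hvol0 : (volume (Ybundle k a lam h)).toReal
      = ∫ x in Sx k lam, (h - ∑ i, a i * x i) := by
    have h1 := bundle_fubini k a lam h hlam' hg (fun _ => (1:ℝ)) continuous_const
    rw [setIntegral_const, smul_eq_mul, mul_one] at h1
    simp_rw [one_mul] at h1
    exact h1
  have hvol1 : (volume (Ybundle k a lam h)).toReal
      = lam^k * (h * ((k:ℝ)+1) - lam * ∑ i, a i) / (Nat.factorial (k+1)) := by
    rw [hvol0, integral_sub (integrableOn_Sx continuous_const)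
        (integrableOn_Sx (continuous_finset_sum _ fun i _ => by fun_prop)),
      integral_finset_sum _ (fun i _ => (integrableOn_Sx (by fun_prop))),
      setIntegral_const, smul_eq_mul, measureReal_def, vol_Sx k lam hlam']
    simp_rw [MeasureTheory.integral_const_mul, int_coord k lam hlam']
    rw [← Finset.sum_mul, Nat.factorial_succ k]
    push_cast
    field_simp
    ring
  have hE : 0 < h * ((k:ℝ)+1) - lam * ∑ i, a i := by
    have e1 : lam * ∑ i, a i = ∑ i, lam * a i := Finset.mul_sum _ _ _
    have e2 : ∑ i, lam * a i ≤ ∑ _i : Fin k, h :=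
      Finset.sum_le_sum (fun i _ => (hha i).le)
    rw [Finset.sum_const, Finset.card_univ, Fintype.card_fin, nsmul_eq_mul] at e2
    have : h * ((k:ℝ)+1) = (k:ℝ) * h + h := by ring
    rw [this, e1]
    linarith
  have hvolpos : 0 < (volume (Ybundle k a lam h)).toReal := by
    rw [hvol1]
    exact div_pos (mul_pos (pow_pos hlam k) hE) (by positivity)
  rw [hfirst, hvol1]
  have hEne := hE.ne'
  have hlk := pow_ne_zero k hlam.ne'
  rw [show ((Nat.factorial (k+2) : ℝ)) = ((k:ℝ)+2) * (Nat.factorial (k+1)) by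
    rw [Nat.factorial_succ (k+1)]; push_cast; ring]
  field_simp
  ring
end

section
/- Let $Y \subset \mathbb{R}^{k+1}$ be the region $\{(x,t) \mid x \in \Delta_k^\lambda, \ 0 \leq t \leq h - \sum_{i=1}^k a_i x_i\}$ with $h > \lambda \cdot \max(0,a_1,\ldots,a_k)$ and $\lambda > 0$. Fix real numbers $\gamma_1,\ldots,\gamma_{k+1}$ with $\sum_{i=1}^{k+1}\gamma_i = 0$, and let $c_j(\lambda,h)$ denote the $j$-th coordinate of the center of mass of $Y$. Then $\sum_{j=1}^k (\gamma_{k+1} - \gamma_j) c_j(\lambda,h) = \lambda\left(\gamma_{k+1} + \frac{\lambda \sum_{i=1}^k \gamma_i a_i}{(k+2)(h(k+1) - \lambda\sum_{i=1}^k a_i)}\right)$. In particular, this expression is a linear function of $(\lambda,h)$ on its domain if and only if $\sum_{i=1}^k \gamma_i a_i = 0$. -/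
open MeasureTheory

/-- The `j`-th coordinate of the center of mass of `Y`. -/
noncomputable def Ycm (k : ℕ) (a : Fin k → ℝ) (lam h : ℝ) (j : Fin k) : ℝ :=
  (∫ p in Ybundle k a lam h, p.1 j) / (volume (Ybundle k a lam h)).toReal

namespace Stmt3Aux
open Set

/-- The simplex `Δ_k^λ`. -/
def Spx (k : ℕ) (lam : ℝ) : Set (Fin k → ℝ) := {x | (∀ j, 0 ≤ x j) ∧ ∑ j, x j ≤ lam}

lemma isClosed_Spx (k : ℕ) (lam : ℝ) : IsClosed (Spx k lam) := by
  have h1 : IsClosed {x : Fin k → ℝ | ∀ j, 0 ≤ x j} := by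
    have : {x : Fin k → ℝ | ∀ j, 0 ≤ x j} = ⋂ j, {x | 0 ≤ x j} := by ext x; simp
    rw [this]
    exact isClosed_iInter fun j => isClosed_le continuous_const (continuous_apply j)
  have h2 : IsClosed {x : Fin k → ℝ | ∑ j, x j ≤ lam} :=
    isClosed_le (by continuity) continuous_const
  exact h1.inter h2

lemma measurableSet_Spx (k : ℕ) (lam : ℝ) : MeasurableSet (Spx k lam) :=
  (isClosed_Spx k lam).measurableSet

lemma Spx_subset_box (k : ℕ) (lam : ℝ) :
    Spx k lam ⊆ Set.pi Set.univ (fun _ : Fin k => Icc 0 lam) := by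
  intro x hx j _
  refine ⟨hx.1 j, le_trans ?_ hx.2⟩
  exact Finset.single_le_sum (fun i _ => hx.1 i) (Finset.mem_univ j)

lemma Spx_empty {k : ℕ} {lam : ℝ} (hlam : lam < 0) : Spx k lam = ∅ := by
  ext x
  simp only [Spx, mem_setOf_eq, mem_empty_iff_false, iff_false]
  rintro ⟨h1, h2⟩
  have : (0:ℝ) ≤ ∑ j, x j := Finset.sum_nonneg fun i _ => h1 i
  linarith

lemma integrableOn_Spx {k : ℕ} {lam : ℝ} {f : (Fin k → ℝ) → ℝ} (hf : Continuous f) :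
    IntegrableOn f (Spx k lam) := by
  have hK : IsCompact (Set.pi Set.univ (fun _ : Fin k => Icc (0:ℝ) lam)) :=
    isCompact_univ_pi fun _ => isCompact_Icc
  exact (hf.locallyIntegrable.integrableOn_isCompact hK).mono_set (Spx_subset_box k lam)



lemma setIntegral_Ici_eq_Icc (lam : ℝ) (F : ℝ → ℝ)
    (h0 : ∀ t, lam < t → F t = 0) :
    ∫ t in Set.Ici (0:ℝ), F t = ∫ t in Set.Icc 0 lam, F t := by
  rw [← integral_indicator measurableSet_Ici, ← integral_indicator measurableSet_Icc]
  congr 1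
  funext t
  by_cases h1 : t ∈ Icc (0:ℝ) lam
  · rw [indicator_of_mem h1, indicator_of_mem (mem_Ici.2 h1.1)]
  · rw [indicator_of_notMem h1]
    by_cases h2 : t ∈ Ici (0:ℝ)
    · rw [indicator_of_mem h2]
      refine h0 t ?_
      by_contra h3
      exact h1 ⟨mem_Ici.1 h2, not_lt.1 h3⟩
    · rw [indicator_of_notMem h2]

lemma J0 (k : ℕ) {lam : ℝ} (hlam : 0 ≤ lam) :
    ∫ t in Set.Icc (0:ℝ) lam, (lam - t)^k = lam^(k+1) / (k+1) := by
  rw [integral_Icc_eq_integral_Ioc, ← intervalIntegral.integral_of_le hlam]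
  rw [intervalIntegral.integral_comp_sub_left (fun s => s^k) lam]
  simp only [sub_zero, sub_self]
  rw [integral_pow]
  simp

lemma J1 (k : ℕ) {lam : ℝ} (hlam : 0 ≤ lam) :
    ∫ t in Set.Icc (0:ℝ) lam, t * (lam - t)^k = lam^(k+2) / ((k+1)*(k+2)) := by
  rw [integral_Icc_eq_integral_Ioc, ← intervalIntegral.integral_of_le hlam]
  have h1 : ∀ t:ℝ, t * (lam - t)^k = (fun s => (lam - s) * s^k) (lam - t) := by
    intro t; simp only; ring
  simp only [h1]
  rw [intervalIntegral.integral_comp_sub_left (fun s => (lam - s) * s^k) lam]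
  simp only [sub_zero, sub_self]
  rw [show (fun s:ℝ => (lam - s) * s^k) = fun s:ℝ => lam * s^k - s^(k+1) from
    funext fun s => by ring]
  rw [intervalIntegral.integral_sub ((intervalIntegral.intervalIntegrable_pow k).const_mul lam)
    (intervalIntegral.intervalIntegrable_pow (k+1))]
  rw [intervalIntegral.integral_const_mul, integral_pow, integral_pow]
  have c1 : ((k:ℝ)+1) ≠ 0 := by positivity
  have c2 : ((k:ℝ)+2) ≠ 0 := by positivity
  field_simp
  push_cast
  ring

lemma J2 (k : ℕ) {lam : ℝ} (hlam : 0 ≤ lam) :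
    ∫ t in Set.Icc (0:ℝ) lam, t^2 * (lam - t)^k
      = 2 * lam^(k+3) / ((k+1)*(k+2)*(k+3)) := by
  rw [integral_Icc_eq_integral_Ioc, ← intervalIntegral.integral_of_le hlam]
  have h1 : ∀ t:ℝ, t^2 * (lam - t)^k = (fun s => (lam - s)^2 * s^k) (lam - t) := by
    intro t; simp only; ring
  simp only [h1]
  rw [intervalIntegral.integral_comp_sub_left (fun s => (lam - s)^2 * s^k) lam]
  simp only [sub_zero, sub_self]
  rw [show (fun s:ℝ => (lam - s)^2 * s^k)
      = fun s:ℝ => (lam^2 * s^k - (2*lam) * s^(k+1)) + s^(k+2) from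
    funext fun s => by ring]
  rw [intervalIntegral.integral_add (((intervalIntegral.intervalIntegrable_pow k).const_mul _).sub
      ((intervalIntegral.intervalIntegrable_pow (k+1)).const_mul _)) (intervalIntegral.intervalIntegrable_pow (k+2))]
  rw [intervalIntegral.integral_sub ((intervalIntegral.intervalIntegrable_pow k).const_mul _)
    ((intervalIntegral.intervalIntegrable_pow (k+1)).const_mul _)]
  rw [intervalIntegral.integral_const_mul, intervalIntegral.integral_const_mul,
    integral_pow, integral_pow, integral_pow]
  have c1 : ((k:ℝ)+1) ≠ 0 := by positivity
  have c2 : ((k:ℝ)+2) ≠ 0 := by positivity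
  have c3 : ((k:ℝ)+3) ≠ 0 := by positivity
  field_simp
  push_cast
  ring



lemma split (k : ℕ) (i : Fin (k+1)) (lam : ℝ) (g : ℝ → ℝ) (G : (Fin k → ℝ) → ℝ)
    (hg : Continuous g) (hG : Continuous G) :
    ∫ x in Spx (k+1) lam, g (x i) * G (fun m => x (i.succAbove m)) =
    ∫ t in Set.Ici (0:ℝ), g t * ∫ y in Spx k (lam - t), G y := by
  have e := MeasurableEquiv.piFinSuccAbove (fun _ : Fin (k+1) => ℝ) i
  set S : Set (ℝ × (Fin k → ℝ)) :=
    {p | 0 ≤ p.1 ∧ (∀ m, 0 ≤ p.2 m) ∧ p.1 + ∑ m, p.2 m ≤ lam} with hS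
  have hSclosed : IsClosed S := by
    have h1 : IsClosed {p : ℝ × (Fin k → ℝ) | 0 ≤ p.1} :=
      isClosed_le continuous_const continuous_fst
    have h2 : IsClosed {p : ℝ × (Fin k → ℝ) | ∀ m, 0 ≤ p.2 m} := by
      have : {p : ℝ × (Fin k → ℝ) | ∀ m, 0 ≤ p.2 m} = ⋂ m, {p | 0 ≤ p.2 m} := by ext; simp
      rw [this]
      exact isClosed_iInter fun m =>
        isClosed_le continuous_const ((continuous_apply m).comp continuous_snd)
    have h3 : IsClosed {p : ℝ × (Fin k → ℝ) | p.1 + ∑ m, p.2 m ≤ lam} := by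
      apply isClosed_le _ continuous_const
      exact continuous_fst.add (continuous_finset_sum _ fun m _ => (continuous_apply m).comp continuous_snd)
    exact (h1.inter (h2.inter h3))
  have hSmeas : MeasurableSet S := hSclosed.measurableSet
  have hpre : Spx (k+1) lam = (MeasurableEquiv.piFinSuccAbove (fun _ : Fin (k+1) => ℝ) i) ⁻¹' S := by
    ext x
    simp only [Spx, mem_setOf_eq, mem_preimage, hS,
      MeasurableEquiv.piFinSuccAbove_apply]
    rw [Fin.forall_iff_succAbove i, Fin.sum_univ_succAbove _ i]
    constructor
    · rintro ⟨h1, h2⟩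
      exact ⟨h1.1, fun m => h1.2 m, h2⟩
    · rintro ⟨h1, h2, h3⟩
      exact ⟨⟨h1, h2⟩, h3⟩
  have hmp := volume_preserving_piFinSuccAbove (fun _ : Fin (k+1) => ℝ) i
  have hemb := (MeasurableEquiv.piFinSuccAbove (fun _ : Fin (k+1) => ℝ) i).measurableEmbedding
  have h1 : ∫ x in Spx (k+1) lam, g (x i) * G (fun m => x (i.succAbove m)) =
      ∫ p in S, g p.1 * G p.2 := by
    rw [hpre]
    exact hmp.setIntegral_preimage_emb hemb (fun p => g p.1 * G p.2) S
  rw [h1]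
  -- now Fubini on S
  have hf_cont : Continuous (fun p : ℝ × (Fin k → ℝ) => g p.1 * G p.2) :=
    (hg.comp continuous_fst).mul (hG.comp continuous_snd)
  have hSsub : S ⊆ (Icc (0:ℝ) (max lam 0)) ×ˢ (Set.pi Set.univ fun _ : Fin k => Icc (0:ℝ) (max lam 0)) := by
    rintro ⟨t, y⟩ ⟨h1, h2, h3⟩
    have hsum : (0:ℝ) ≤ ∑ m, y m := Finset.sum_nonneg fun m _ => h2 m
    constructor
    · exact ⟨h1, le_max_of_le_left (by linarith)⟩
    · intro m _
      refine ⟨h2 m, le_max_of_le_left ?_⟩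
      have : y m ≤ ∑ m', y m' := Finset.single_le_sum (fun m' _ => h2 m') (Finset.mem_univ m)
      linarith
  have hK : IsCompact ((Icc (0:ℝ) (max lam 0)) ×ˢ (Set.pi Set.univ fun _ : Fin k => Icc (0:ℝ) (max lam 0))) :=
    isCompact_Icc.prod (isCompact_univ_pi fun _ => isCompact_Icc)
  have hint : IntegrableOn (fun p : ℝ × (Fin k → ℝ) => g p.1 * G p.2) S volume :=
    (hf_cont.locallyIntegrable.integrableOn_isCompact hK).mono_set hSsub
  rw [← integral_indicator hSmeas]
  rw [Measure.volume_eq_prod] at hint ⊢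
  rw [integral_prod _ ((integrable_indicator_iff hSmeas).2 hint)]
  have hslice : ∀ t : ℝ, (fun y => S.indicator (fun p : ℝ × (Fin k → ℝ) => g p.1 * G p.2) (t, y)) =
      if 0 ≤ t then (Spx k (lam - t)).indicator (fun y => g t * G y) else 0 := by
    intro t
    by_cases ht : 0 ≤ t
    · simp only [ht, if_true]
      funext y
      by_cases hy : y ∈ Spx k (lam - t)
      · rw [Set.indicator_of_mem hy]
        have hmem : (t, y) ∈ S := ⟨ht, hy.1, by have := hy.2; linarith⟩
        rw [Set.indicator_of_mem hmem]
      · rw [Set.indicator_of_notMem hy]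
        have hmem : (t, y) ∉ S := by
          rintro ⟨_, h2, h3⟩
          exact hy ⟨h2, by linarith⟩
        rw [Set.indicator_of_notMem hmem]
    · simp only [ht, if_false]
      funext y
      have hmem : (t, y) ∉ S := by rintro ⟨h1, -⟩; exact ht h1
      rw [Set.indicator_of_notMem hmem]; rfl
  have : (fun t : ℝ => ∫ y, S.indicator (fun p : ℝ × (Fin k → ℝ) => g p.1 * G p.2) (t, y)) =
      (Set.Ici (0:ℝ)).indicator (fun t => g t * ∫ y in Spx k (lam - t), G y) := by
    funext t
    rw [hslice t]
    by_cases ht : 0 ≤ t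
    · simp only [ht, if_true]
      rw [Set.indicator_of_mem (mem_Ici.2 ht)]
      rw [integral_indicator (measurableSet_Spx k (lam - t))]
      exact integral_const_mul _ _
    · simp only [ht, if_false]
      rw [Set.indicator_of_notMem (fun h => ht (mem_Ici.1 h))]
      simp
  rw [this, integral_indicator measurableSet_Ici]




lemma vol_Spx : ∀ (k : ℕ) {lam : ℝ}, 0 ≤ lam →
    ∫ x in Spx k lam, (1:ℝ) = lam^k / (k.factorial : ℝ) := by
  intro k
  induction k with
  | zero =>
    intro lam hlam
    have huniv : Spx 0 lam = univ := by
      ext x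
      simp [Spx, hlam]
    rw [huniv, setIntegral_const]
    have : (volume : Measure (Fin 0 → ℝ)) univ = 1 := by
      rw [volume_pi, Measure.pi_univ]
      simp
    rw [measureReal_def, this]
    simp
  | succ k ih =>
    intro lam hlam
    have base_ite : ∀ c : ℝ, (∫ y in Spx k c, (1:ℝ))
        = if 0 ≤ c then c^k / (k.factorial : ℝ) else 0 := by
      intro c
      by_cases hc : 0 ≤ c
      · rw [if_pos hc]; exact ih hc
      · rw [if_neg hc, Spx_empty (not_le.1 hc)]; simp
    have h1 : ∫ x in Spx (k+1) lam, (1:ℝ)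
        = ∫ x in Spx (k+1) lam,
            (fun _ : ℝ => (1:ℝ)) (x 0) * (fun _ : Fin k → ℝ => (1:ℝ))
              (fun m => x ((0 : Fin (k+1)).succAbove m)) := by norm_num
    rw [h1, split k 0 lam (fun _ : ℝ => (1:ℝ)) (fun _ : Fin k → ℝ => (1:ℝ)) continuous_const continuous_const]
    simp only [base_ite, one_mul]
    rw [setIntegral_Ici_eq_Icc lam _ (fun t ht => by rw [if_neg (by linarith)])]
    rw [setIntegral_congr_fun measurableSet_Icc
      (fun t ht => if_pos (by simp only [mem_Icc] at ht; linarith))]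
    rw [integral_div, J0 k hlam]
    rw [Nat.factorial_succ]
    push_cast
    have c1 : ((k:ℝ)+1) ≠ 0 := by positivity
    have c2 : (k.factorial : ℝ) ≠ 0 := by positivity
    field_simp
    try ring
    try tauto

lemma m1_Spx (k : ℕ) (j : Fin k) {lam : ℝ} (hlam : 0 ≤ lam) :
    ∫ x in Spx k lam, x j = lam^(k+1) / (((k:ℝ)+1) * (k.factorial : ℝ)) := by
  cases k with
  | zero => exact j.elim0
  | succ n =>
    have base_ite : ∀ c : ℝ, (∫ y in Spx n c, (1:ℝ))
        = if 0 ≤ c then c^n / (n.factorial : ℝ) else 0 := by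
      intro c
      by_cases hc : 0 ≤ c
      · rw [if_pos hc]; exact vol_Spx n hc
      · rw [if_neg hc, Spx_empty (not_le.1 hc)]; simp
    have h1 : ∫ x in Spx (n+1) lam, x j
        = ∫ x in Spx (n+1) lam,
            (fun t : ℝ => t) (x j) * (fun _ : Fin n → ℝ => (1:ℝ))
              (fun m => x (j.succAbove m)) := by norm_num
    rw [h1, split n j lam (fun t : ℝ => t) (fun _ : Fin n → ℝ => (1:ℝ)) continuous_id continuous_const]
    simp only [base_ite, mul_one]
    rw [setIntegral_Ici_eq_Icc lam _ (fun t ht => by rw [if_neg (by linarith), mul_zero])]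
    rw [setIntegral_congr_fun measurableSet_Icc
      (fun t ht => by rw [if_pos (by simp only [mem_Icc] at ht; linarith)])]
    simp only [mul_div_assoc']
    rw [integral_div, J1 n hlam]
    have c1 : ((n:ℝ)+1) ≠ 0 := by positivity
    have c2 : ((n:ℝ)+2) ≠ 0 := by positivity
    have c3 : (n.factorial : ℝ) ≠ 0 := by positivity
    rw [Nat.factorial_succ]
    push_cast
    field_simp
    try ring
    try tauto

lemma m2_diag_Spx (k : ℕ) (j : Fin k) {lam : ℝ} (hlam : 0 ≤ lam) :
    ∫ x in Spx k lam, (x j)^2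
      = 2 * lam^(k+2) / ((((k:ℝ)+2) * ((k:ℝ)+1)) * (k.factorial : ℝ)) := by
  cases k with
  | zero => exact j.elim0
  | succ n =>
    have base_ite : ∀ c : ℝ, (∫ y in Spx n c, (1:ℝ))
        = if 0 ≤ c then c^n / (n.factorial : ℝ) else 0 := by
      intro c
      by_cases hc : 0 ≤ c
      · rw [if_pos hc]; exact vol_Spx n hc
      · rw [if_neg hc, Spx_empty (not_le.1 hc)]; simp
    have h1 : ∫ x in Spx (n+1) lam, (x j)^2
        = ∫ x in Spx (n+1) lam,
            (fun t : ℝ => t^2) (x j) * (fun _ : Fin n → ℝ => (1:ℝ))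
              (fun m => x (j.succAbove m)) := by norm_num
    rw [h1, split n j lam (fun t : ℝ => t^2) (fun _ : Fin n → ℝ => (1:ℝ)) (by continuity) continuous_const]
    simp only [base_ite, mul_one]
    rw [setIntegral_Ici_eq_Icc lam _ (fun t ht => by rw [if_neg (by linarith), mul_zero])]
    rw [setIntegral_congr_fun measurableSet_Icc
      (fun t ht => by rw [if_pos (by simp only [mem_Icc] at ht; linarith)])]
    simp only [mul_div_assoc']
    rw [integral_div, J2 n hlam]
    have c1 : ((n:ℝ)+1) ≠ 0 := by positivity
    have c2 : ((n:ℝ)+2) ≠ 0 := by positivity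
    have c3 : ((n:ℝ)+3) ≠ 0 := by positivity
    have c4 : (n.factorial : ℝ) ≠ 0 := by positivity
    rw [Nat.factorial_succ]
    push_cast
    field_simp
    try ring
    try tauto

lemma m2_off_Spx (k : ℕ) (i j : Fin k) (hij : i ≠ j) {lam : ℝ} (hlam : 0 ≤ lam) :
    ∫ x in Spx k lam, x i * x j
      = lam^(k+2) / ((((k:ℝ)+2) * ((k:ℝ)+1)) * (k.factorial : ℝ)) := by
  cases k with
  | zero => exact j.elim0
  | succ n =>
    obtain ⟨m, hm⟩ := Fin.exists_succAbove_eq hij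
    have base_ite : ∀ c : ℝ, (∫ y in Spx n c, y m)
        = if 0 ≤ c then c^(n+1) / (((n:ℝ)+1) * (n.factorial : ℝ)) else 0 := by
      intro c
      by_cases hc : 0 ≤ c
      · rw [if_pos hc]; exact m1_Spx n m hc
      · rw [if_neg hc, Spx_empty (not_le.1 hc)]; simp
    have h1 : ∫ x in Spx (n+1) lam, x i * x j
        = ∫ x in Spx (n+1) lam,
            (fun t : ℝ => t) (x j) * (fun y : Fin n → ℝ => y m)
              (fun m' => x (j.succAbove m')) := by
      refine setIntegral_congr_fun (measurableSet_Spx _ _) (fun x _ => ?_)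
      simp only [← hm]
      ring
    rw [h1, split n j lam (fun t : ℝ => t) (fun y : Fin n → ℝ => y m) continuous_id (continuous_apply m)]
    simp only [base_ite]
    rw [setIntegral_Ici_eq_Icc lam _ (fun t ht => by rw [if_neg (by linarith), mul_zero])]
    rw [setIntegral_congr_fun measurableSet_Icc
      (fun t ht => by rw [if_pos (by simp only [mem_Icc] at ht; linarith)])]
    simp only [mul_div_assoc']
    rw [integral_div, J1 (n+1) hlam]
    have c1 : ((n:ℝ)+1) ≠ 0 := by positivity
    have c2 : ((n:ℝ)+2) ≠ 0 := by positivity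
    have c3 : ((n:ℝ)+3) ≠ 0 := by positivity
    have c4 : (n.factorial : ℝ) ≠ 0 := by positivity
    rw [Nat.factorial_succ]
    push_cast
    field_simp
    try ring
    try tauto


lemma measurableSet_Ybundle (k : ℕ) (a : Fin k → ℝ) (lam h : ℝ) :
    MeasurableSet (Ybundle k a lam h) := by
  have h1 : IsClosed {p : (Fin k → ℝ) × ℝ | ∀ j, 0 ≤ p.1 j} := by
    have : {p : (Fin k → ℝ) × ℝ | ∀ j, 0 ≤ p.1 j} = ⋂ j, {p | 0 ≤ p.1 j} := by ext; simp
    rw [this]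
    exact isClosed_iInter fun j =>
      isClosed_le continuous_const ((continuous_apply j).comp continuous_fst)
  have h2 : IsClosed {p : (Fin k → ℝ) × ℝ | ∑ j, p.1 j ≤ lam} :=
    isClosed_le (continuous_finset_sum _ fun j _ => (continuous_apply j).comp continuous_fst)
      continuous_const
  have h3 : IsClosed {p : (Fin k → ℝ) × ℝ | 0 ≤ p.2} := isClosed_le continuous_const continuous_snd
  have h4 : IsClosed {p : (Fin k → ℝ) × ℝ | p.2 ≤ h - ∑ i, a i * p.1 i} := by
    apply isClosed_le continuous_snd
    exact continuous_const.sub (continuous_finset_sum _ fun i _ =>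
      continuous_const.mul ((continuous_apply i).comp continuous_fst))
  exact (h1.inter (h2.inter (h3.inter h4))).measurableSet

lemma bundle_integral (k : ℕ) (a : Fin k → ℝ) (lam h : ℝ) (hlam : 0 ≤ lam)
    (hc : ∀ x ∈ Spx k lam, 0 ≤ h - ∑ i, a i * x i)
    (f : (Fin k → ℝ) → ℝ) (hf : Continuous f) :
    ∫ p in Ybundle k a lam h, f p.1 = ∫ x in Spx k lam, f x * (h - ∑ i, a i * x i) := by
  have hYm := measurableSet_Ybundle k a lam h
  have hh0 : 0 ≤ h := by
    have h0 : (fun _ => 0 : Fin k → ℝ) ∈ Spx k lam := by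
      constructor
      · intro j; exact le_refl 0
      · simp [hlam]
    have := hc _ h0
    simpa using this
  set M := h + (∑ i, |a i|) * lam with hM
  have hsub : Ybundle k a lam h ⊆
      (Set.pi Set.univ fun _ : Fin k => Icc (0:ℝ) lam) ×ˢ Icc (0:ℝ) M := by
    rintro ⟨x, t⟩ ⟨h1, h2, h3, h4⟩
    have hxle : ∀ j, x j ≤ lam := fun j =>
      le_trans (Finset.single_le_sum (fun i _ => h1 i) (Finset.mem_univ j)) h2
    refine ⟨fun j _ => ⟨h1 j, hxle j⟩, h3, ?_⟩
    have hlb : -(∑ i, |a i| * lam) ≤ ∑ i, a i * x i := by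
      rw [← Finset.sum_neg_distrib]
      exact Finset.sum_le_sum fun i _ => by nlinarith [neg_abs_le (a i), h1 i, hxle i, abs_nonneg (a i)]
    have : (∑ i, |a i| * lam) = (∑ i, |a i|) * lam := by rw [Finset.sum_mul]
    simp only [hM]
    linarith
  have hK : IsCompact ((Set.pi Set.univ fun _ : Fin k => Icc (0:ℝ) lam) ×ˢ Icc (0:ℝ) M) :=
    (isCompact_univ_pi fun _ => isCompact_Icc).prod isCompact_Icc
  have hint : IntegrableOn (fun p : (Fin k → ℝ) × ℝ => f p.1) (Ybundle k a lam h) volume :=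
    ((hf.comp continuous_fst).locallyIntegrable.integrableOn_isCompact hK).mono_set hsub
  rw [← integral_indicator hYm]
  rw [Measure.volume_eq_prod] at hint ⊢
  rw [integral_prod _ ((integrable_indicator_iff hYm).2 hint)]
  have hslice : (fun x => ∫ t, (Ybundle k a lam h).indicator
        (fun p : (Fin k → ℝ) × ℝ => f p.1) (x, t))
      = (Spx k lam).indicator (fun x => f x * (h - ∑ i, a i * x i)) := by
    funext x
    by_cases hx : x ∈ Spx k lam
    · have heq : (fun t => (Ybundle k a lam h).indicator
          (fun p : (Fin k → ℝ) × ℝ => f p.1) (x, t))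
          = (Icc 0 (h - ∑ i, a i * x i)).indicator (fun _ => f x) := by
        funext t
        by_cases ht : t ∈ Icc (0:ℝ) (h - ∑ i, a i * x i)
        · rw [indicator_of_mem ht, indicator_of_mem]
          exact ⟨hx.1, hx.2, ht.1, ht.2⟩
        · rw [indicator_of_notMem ht, indicator_of_notMem]
          intro hmem
          exact ht ⟨hmem.2.2.1, hmem.2.2.2⟩
      rw [heq, integral_indicator measurableSet_Icc, setIntegral_const,
        indicator_of_mem hx, measureReal_def, Real.volume_Icc, sub_zero,
        ENNReal.toReal_ofReal (hc x hx), smul_eq_mul, mul_comm]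
    · have hnot : ∀ t, (x, t) ∉ Ybundle k a lam h := fun t hmem => hx ⟨hmem.1, hmem.2.1⟩
      rw [indicator_of_notMem hx]
      simp only [indicator_of_notMem (hnot _)]
      simp
  rw [hslice, integral_indicator (measurableSet_Spx k lam)]

lemma integral_linear_Spx (k : ℕ) (a : Fin k → ℝ) (h lam : ℝ)
    (f : (Fin k → ℝ) → ℝ) (hf : Continuous f) :
    ∫ x in Spx k lam, f x * (h - ∑ i, a i * x i)
      = h * (∫ x in Spx k lam, f x) - ∑ i, a i * ∫ x in Spx k lam, f x * x i := by
  rw [show (fun x => f x * (h - ∑ i, a i * x i))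
      = fun x => h * f x - ∑ i, a i * (f x * x i) from funext fun x => by
    rw [mul_sub]
    congr 1
    · ring
    · rw [Finset.mul_sum]
      exact Finset.sum_congr rfl fun i _ => by ring]
  rw [integral_sub ((integrableOn_Spx hf).const_mul h) (by
    apply integrable_finset_sum
    intro i _
    exact (integrableOn_Spx (hf.mul (continuous_apply i))).const_mul (a i))]
  rw [integral_const_mul]
  have hsum := integral_finset_sum (μ := volume.restrict (Spx k lam))
    (f := fun i x => a i * (f x * x i)) Finset.univ (fun i _ =>
    (integrableOn_Spx (hf.mul (continuous_apply i))).const_mul (a i))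
  rw [hsum]
  have : ∀ i : Fin k, (∫ x in Spx k lam, a i * (f x * x i)) = a i * ∫ x in Spx k lam, f x * x i :=
    fun i => integral_const_mul _ _
  simp only [this]

lemma part1 (k : ℕ) (a : Fin k → ℝ) (γ : Fin (k+1) → ℝ) (hγ : ∑ i, γ i = 0)
    (lam h : ℝ) (hlam : 0 < lam) (hh : 0 < h) (ha : ∀ i, lam * a i < h) :
    ∑ j : Fin k, (γ (Fin.last k) - γ j.castSucc) * Ycm k a lam h j =
      lam * (γ (Fin.last k) +
        lam * (∑ i : Fin k, γ i.castSucc * a i) /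
          (((k : ℝ) + 2) * (h * ((k : ℝ) + 1) - lam * ∑ i, a i))) := by
  have hFpos : (0:ℝ) < (k.factorial : ℝ) := by exact_mod_cast k.factorial_pos
  have hF0 : (k.factorial : ℝ) ≠ 0 := hFpos.ne'
  have hk1 : ((k:ℝ)+1) ≠ 0 := by positivity
  have hk2 : ((k:ℝ)+2) ≠ 0 := by positivity
  have hlam' : (0:ℝ) ≤ lam := hlam.le
  have hc : ∀ x ∈ Spx k lam, 0 ≤ h - ∑ i, a i * x i := by
    intro x hx
    have h1 : ∑ i, (lam * a i) * x i ≤ ∑ i, h * x i :=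
      Finset.sum_le_sum fun i _ => mul_le_mul_of_nonneg_right (ha i).le (hx.1 i)
    have h2 : ∑ i, (lam * a i) * x i = lam * ∑ i, a i * x i := by
      rw [Finset.mul_sum]; exact Finset.sum_congr rfl fun i _ => by ring
    have h3 : ∑ i, h * x i = h * ∑ i, x i := (Finset.mul_sum _ _ _).symm
    have h4 : h * ∑ i, x i ≤ h * lam := mul_le_mul_of_nonneg_left hx.2 hh.le
    nlinarith
  have hD : 0 < h * ((k:ℝ)+1) - lam * ∑ i, a i := by
    have h1 : lam * ∑ i, a i ≤ (k:ℝ) * h := by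
      rw [Finset.mul_sum]
      calc ∑ i, lam * a i ≤ ∑ _i : Fin k, h := Finset.sum_le_sum fun i _ => (ha i).le
        _ = (k:ℝ) * h := by
            rw [Finset.sum_const, Finset.card_univ, Fintype.card_fin, nsmul_eq_mul]
    nlinarith
  have hm1 : ∀ i : Fin k, (∫ x in Spx k lam, x i)
      = lam^(k+1) / (((k:ℝ)+1) * (k.factorial:ℝ)) := fun i => m1_Spx k i hlam'
  have hm2sum : ∀ j : Fin k, (∑ i, a i * ∫ x in Spx k lam, x j * x i)
      = ((∑ i, a i) + a j) * (lam^(k+2) / ((((k:ℝ)+2) * ((k:ℝ)+1)) * (k.factorial:ℝ))) := by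
    intro j
    have hterm : ∀ i : Fin k, a i * (∫ x in Spx k lam, x j * x i)
        = a i * (lam^(k+2) / ((((k:ℝ)+2)*((k:ℝ)+1))*(k.factorial:ℝ)))
          + (if i = j then a i * (lam^(k+2) / ((((k:ℝ)+2)*((k:ℝ)+1))*(k.factorial:ℝ))) else 0) := by
      intro i
      by_cases hij : i = j
      · subst hij
        rw [if_pos rfl]
        have hsq : (∫ x in Spx k lam, x i * x i) = ∫ x in Spx k lam, (x i)^2 := by
          refine setIntegral_congr_fun (measurableSet_Spx k lam) (fun x _ => ?_)
          ring
        rw [hsq, m2_diag_Spx k i hlam']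
        ring
      · rw [if_neg hij, m2_off_Spx k j i (fun e => hij e.symm) hlam', add_zero]
    rw [Finset.sum_congr rfl fun i _ => hterm i, Finset.sum_add_distrib,
      Finset.sum_ite_eq' Finset.univ j
        (fun i => a i * (lam^(k+2) / ((((k:ℝ)+2)*((k:ℝ)+1))*(k.factorial:ℝ))))]
    rw [← Finset.sum_mul]
    simp only [Finset.mem_univ, if_true]
    ring
  have hVol : (volume (Ybundle k a lam h)).toReal
      = h * (lam^k / (k.factorial:ℝ))
        - (∑ i, a i) * (lam^(k+1) / (((k:ℝ)+1) * (k.factorial:ℝ))) := by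
    have h1 : ∫ p in Ybundle k a lam h, (1:ℝ) = (volume (Ybundle k a lam h)).toReal := by
      rw [setIntegral_const]; simp [measureReal_def]
    rw [← h1, bundle_integral k a lam h hlam' hc (fun _ => (1:ℝ)) continuous_const,
      integral_linear_Spx k a h lam (fun _ => (1:ℝ)) continuous_const]
    simp only [one_mul]
    rw [vol_Spx k hlam']
    simp only [hm1]
    rw [← Finset.sum_mul]
  have hNum : ∀ j : Fin k, (∫ p in Ybundle k a lam h, p.1 j)
      = h * (lam^(k+1) / (((k:ℝ)+1) * (k.factorial:ℝ)))
        - ((∑ i, a i) + a j)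
          * (lam^(k+2) / ((((k:ℝ)+2)*((k:ℝ)+1))*(k.factorial:ℝ))) := by
    intro j
    rw [bundle_integral k a lam h hlam' hc (fun x => x j) (continuous_apply j),
      integral_linear_Spx k a h lam (fun x => x j) (continuous_apply j)]
    rw [m1_Spx k j hlam', hm2sum j]
  have hVpos : 0 < h * (lam^k / (k.factorial:ℝ))
      - (∑ i, a i) * (lam^(k+1) / (((k:ℝ)+1) * (k.factorial:ℝ))) := by
    have heq : h * (lam^k / (k.factorial:ℝ))
        - (∑ i, a i) * (lam^(k+1) / (((k:ℝ)+1) * (k.factorial:ℝ)))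
        = lam^k * (h * ((k:ℝ)+1) - lam * ∑ i, a i) / (((k:ℝ)+1) * (k.factorial:ℝ)) := by
      field_simp
      ring
    rw [heq]
    exact div_pos (mul_pos (pow_pos hlam k) hD) (by positivity)
  have hYcm : ∀ j : Fin k, Ycm k a lam h j
      = (h * (lam^(k+1) / (((k:ℝ)+1) * (k.factorial:ℝ)))
          - ((∑ i, a i) + a j) * (lam^(k+2) / ((((k:ℝ)+2)*((k:ℝ)+1))*(k.factorial:ℝ))))
        / (h * (lam^k / (k.factorial:ℝ))
          - (∑ i, a i) * (lam^(k+1) / (((k:ℝ)+1) * (k.factorial:ℝ)))) := by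
    intro j
    rw [Ycm, hVol, hNum j]
  have hV0 : (h * (lam^k / (k.factorial:ℝ))
      - (∑ i, a i) * (lam^(k+1) / (((k:ℝ)+1) * (k.factorial:ℝ)))) ≠ 0 := hVpos.ne'
  have hYcm' : ∀ j : Fin k, Ycm k a lam h j
      = lam * (((k:ℝ)+2)*h - lam*((∑ i, a i) + a j))
        / (((k:ℝ)+2) * (h*((k:ℝ)+1) - lam * ∑ i, a i)) := by
    intro j
    rw [hYcm j, div_eq_div_iff hV0 (mul_ne_zero hk2 hD.ne')]
    field_simp
    ring
  have hsum1 : ∑ j : Fin k, (γ (Fin.last k) - γ j.castSucc)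
      = ((k:ℝ)+1) * γ (Fin.last k) := by
    have h0 : ∑ j : Fin k, γ j.castSucc = - γ (Fin.last k) := by
      have h1 := hγ
      rw [Fin.sum_univ_castSucc] at h1
      linarith
    rw [Finset.sum_sub_distrib, h0, Finset.sum_const, Finset.card_univ, Fintype.card_fin,
      nsmul_eq_mul]
    ring
  have hsum2 : ∑ j : Fin k, (γ (Fin.last k) - γ j.castSucc) * a j
      = γ (Fin.last k) * (∑ i, a i) - ∑ i : Fin k, γ i.castSucc * a i := by
    simp only [sub_mul]
    rw [Finset.sum_sub_distrib, ← Finset.mul_sum]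
  have hexp : ∀ j : Fin k, (γ (Fin.last k) - γ j.castSucc) * Ycm k a lam h j
      = (γ (Fin.last k) - γ j.castSucc)
          * (lam * (((k:ℝ)+2)*h - lam*(∑ i, a i))
            / (((k:ℝ)+2) * (h*((k:ℝ)+1) - lam * ∑ i, a i)))
        + ((γ (Fin.last k) - γ j.castSucc) * a j)
          * (-(lam * lam / (((k:ℝ)+2) * (h*((k:ℝ)+1) - lam * ∑ i, a i)))) := by
    intro j
    rw [hYcm' j]
    ring
  rw [Finset.sum_congr rfl fun j _ => hexp j, Finset.sum_add_distrib,
    ← Finset.sum_mul, ← Finset.sum_mul, hsum1, hsum2]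
  have hD2 : ((k:ℝ)+1)*h - lam*∑ i, a i ≠ 0 := by nlinarith
  field_simp [hk2, hD.ne']
  ring

end Stmt3Aux

/-- For `γ₁,…,γ_{k+1}` with `∑ γᵢ = 0`, one has
`∑ⱼ (γ_{k+1} - γⱼ) cⱼ(λ,h) = λ(γ_{k+1} + λ ∑ γᵢaᵢ / ((k+2)(h(k+1) - λ ∑ aᵢ)))`
on the domain `{(λ,h) : λ > 0, h > λ max(0,a₁,…,a_k)}`, and this expression is a linear
(affine) function of `(λ,h)` on that domain if and only if `∑ γᵢ aᵢ = 0`. -/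
theorem stmt3 (k : ℕ) (a : Fin k → ℝ) (γ : Fin (k + 1) → ℝ)
    (hγ : ∑ i, γ i = 0) :
    (∀ lam h : ℝ, 0 < lam → 0 < h → (∀ i, lam * a i < h) →
        ∑ j : Fin k, (γ (Fin.last k) - γ j.castSucc) * Ycm k a lam h j =
          lam * (γ (Fin.last k) +
            lam * (∑ i : Fin k, γ i.castSucc * a i) /
              (((k : ℝ) + 2) * (h * ((k : ℝ) + 1) - lam * ∑ i, a i)))) ∧
      ((∃ A B C : ℝ, ∀ lam h : ℝ, 0 < lam → 0 < h → (∀ i, lam * a i < h) →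
            ∑ j : Fin k, (γ (Fin.last k) - γ j.castSucc) * Ycm k a lam h j =
              A * lam + B * h + C) ↔
        ∑ i : Fin k, γ i.castSucc * a i = 0) := by

  refine ⟨fun lam h hlam hh ha => Stmt3Aux.part1 k a γ hγ lam h hlam hh ha, ?_, ?_⟩
  · rintro ⟨A, B, C, hABC⟩
    set R : ℝ := 1 + ∑ i, |a i| with hR
    have hR1 : (1:ℝ) ≤ R := by
      rw [hR]
      have : (0:ℝ) ≤ ∑ i, |a i| := Finset.sum_nonneg fun i _ => abs_nonneg _
      linarith
    have hRpos : (0:ℝ) < R := lt_of_lt_of_le one_pos hR1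
    have hSle : (∑ i, a i) ≤ R - 1 := by
      rw [hR]
      have : (∑ i, a i) ≤ ∑ i, |a i| := Finset.sum_le_sum fun i _ => le_abs_self _
      linarith
    have hale : ∀ i, a i ≤ R - 1 := by
      intro i
      rw [hR]
      have h1 : |a i| ≤ ∑ i, |a i| :=
        Finset.single_le_sum (fun j _ => abs_nonneg (a j)) (Finset.mem_univ i)
      have h2 := le_abs_self (a i)
      linarith
    have hmain : ∀ m : ℝ, 1 ≤ m →
        (∑ i : Fin k, γ i.castSucc * a i)
          = (A * 1 + B * (m*R) + C - γ (Fin.last k))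
            * (((k:ℝ)+2) * ((m*R) * ((k:ℝ)+1) - 1 * ∑ i, a i)) := by
      intro m hm
      have hmR : 0 < m * R := by nlinarith
      have hia : ∀ i, (1:ℝ) * a i < m * R := by
        intro i
        have := hale i
        nlinarith
      have hDm : 0 < (m*R) * ((k:ℝ)+1) - 1 * ∑ i, a i := by
        have hk0 : (0:ℝ) ≤ (k:ℝ) := Nat.cast_nonneg k
        nlinarith [hSle, hmR]
      have hDm0 : (((k:ℝ)+2) * ((m*R) * ((k:ℝ)+1) - 1 * ∑ i, a i)) ≠ 0 := by positivity
      have em := (hABC 1 (m*R) one_pos hmR hia).symm.trans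
        (Stmt3Aux.part1 k a γ hγ 1 (m*R) one_pos hmR hia)
      rw [em]
      have hne : ((k:ℝ) + 2) * (m * R * ((k:ℝ) + 1) - ∑ i, a i) ≠ 0 := by
        have : (0:ℝ) < ((k:ℝ) + 2) * (m * R * ((k:ℝ) + 1) - ∑ i, a i) := by nlinarith
        exact this.ne'
      have hne2 : m * R * ((k:ℝ) + 1) - ∑ i, a i ≠ 0 := by nlinarith
      field_simp
      ring
    have E1 := hmain 1 le_rfl
    have E2 := hmain 2 (by norm_num)
    have E3 := hmain 3 (by norm_num)
    have hT2 : (∑ i : Fin k, γ i.castSucc * a i) * (2 * (((k:ℝ)+1) * R)^2) = 0 := by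
      linear_combination
        ((2*(((k:ℝ)+1)*R) - ∑ i, a i) * (3*(((k:ℝ)+1)*R) - ∑ i, a i)) * E1
        - 2*(((((k:ℝ)+1)*R) - ∑ i, a i) * (3*(((k:ℝ)+1)*R) - ∑ i, a i)) * E2
        + (((((k:ℝ)+1)*R) - ∑ i, a i) * (2*(((k:ℝ)+1)*R) - ∑ i, a i)) * E3
    have hu2 : (2 * (((k:ℝ)+1) * R)^2) ≠ 0 := by positivity
    exact (mul_eq_zero.1 hT2).resolve_right hu2
  · intro hT
    refine ⟨γ (Fin.last k), 0, 0, fun lam h hlam hh ha => ?_⟩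
    rw [Stmt3Aux.part1 k a γ hγ lam h hlam hh ha, hT]
    ring
end

section
/- Suppose two distinct facets $F_i, F_j$ of a compact convex polytope $\Delta \subset \mathbb{R}^n$ (with outward conormals $\eta_1,\ldots,\eta_N$) are such that there exists a nonzero vector $\xi \in \mathbb{R}^n$ with $\langle \eta_k, \xi \rangle = 0$ for all $k \notin \{i,j\}$. Then $\langle \eta_i, \xi \rangle$ and $\langle \eta_j, \xi \rangle$ have opposite signs (both nonzero). In particular, $\eta_i$ cannot be written as a nonnegative linear combination of the conormals $\{\eta_k\}_{k \neq i}$. -/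
/-- Suppose `Δ = ⋂ₖ {x | ⟨ηₖ,x⟩ ≤ κₖ}` is a compact convex polytope with nonempty
interior and there is a nonzero vector `ξ` with `⟨ηₖ,ξ⟩ = 0` for all `k ∉ {i,j}`.
Then `⟨ηᵢ,ξ⟩` and `⟨ηⱼ,ξ⟩` are both nonzero with opposite signs (their product is
negative), and `ηᵢ` cannot be written as a nonnegative linear combination of the
conormals `{ηₖ}_{k ≠ i}`. -/
theorem stmt11 (n N : ℕ) (η : Fin N → Fin n → ℝ) (κ : Fin N → ℝ)
    (Δ : Set (Fin n → ℝ))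
    (hΔ : Δ = ⋂ k, {x : Fin n → ℝ | ∑ l, η k l * x l ≤ κ k})
    (hbd : Bornology.IsBounded Δ)
    (hint : (interior Δ).Nonempty)
    (i j : Fin N) (hij : i ≠ j)
    (ξ : Fin n → ℝ) (hξ : ξ ≠ 0)
    (hperp : ∀ k, k ≠ i → k ≠ j → ∑ l, η k l * ξ l = 0) :
    (∑ l, η i l * ξ l) * (∑ l, η j l * ξ l) < 0 ∧
    ¬ ∃ c : Fin N → ℝ, (∀ k, 0 ≤ c k) ∧ c i = 0 ∧ η i = ∑ k, c k • η k := by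
  obtain ⟨x₀, hx₀⟩ := hint
  have hx₀Δ : x₀ ∈ Δ := interior_subset hx₀
  obtain ⟨R, hR⟩ := Bornology.IsBounded.exists_norm_le hbd
  have key : ∀ ζ : Fin n → ℝ, ζ ≠ 0 → (∀ k, k ≠ i → k ≠ j → ∑ l, η k l * ζ l = 0) →
      ¬ ((∑ l, η i l * ζ l) ≤ 0 ∧ (∑ l, η j l * ζ l) ≤ 0) := by
    rintro ζ hζ hp ⟨ha, hb⟩
    have hζn : (0:ℝ) < ‖ζ‖ := norm_pos_iff.mpr hζ
    have hmem : ∀ t : ℝ, 0 ≤ t → x₀ + t • ζ ∈ Δ := by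
      intro t ht
      rw [hΔ]
      simp only [Set.mem_iInter, Set.mem_setOf_eq]
      intro k
      have hx : ∑ l, η k l * x₀ l ≤ κ k := by
        rw [hΔ] at hx₀Δ
        simpa using Set.mem_iInter.mp hx₀Δ k
      have hsplit : ∑ l, η k l * (x₀ l + t * ζ l)
          = (∑ l, η k l * x₀ l) + t * ∑ l, η k l * ζ l := by
        rw [Finset.mul_sum, ← Finset.sum_add_distrib]
        exact Finset.sum_congr rfl fun l _ => by ring
      simp only [Pi.add_apply, Pi.smul_apply, smul_eq_mul]
      rw [hsplit]
      rcases eq_or_ne k i with rfl | hki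
      · nlinarith [mul_nonpos_of_nonneg_of_nonpos ht ha]
      rcases eq_or_ne k j with rfl | hkj
      · nlinarith [mul_nonpos_of_nonneg_of_nonpos ht hb]
      · rw [hp k hki hkj]; simpa using hx
    set t : ℝ := (R + ‖x₀‖ + 1) / ‖ζ‖ with ht_def
    have hR0 : ‖x₀‖ ≤ R := hR x₀ hx₀Δ
    have ht : 0 ≤ t := by
      apply div_nonneg _ hζn.le
      have : (0:ℝ) ≤ ‖x₀‖ := norm_nonneg _
      linarith
    have hmemt := hR _ (hmem t ht)
    have htri : t * ‖ζ‖ - ‖x₀‖ ≤ ‖x₀ + t • ζ‖ := by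
      have h1 : ‖t • ζ‖ ≤ ‖x₀ + t • ζ‖ + ‖x₀‖ := by
        have := norm_sub_le (x₀ + t • ζ) x₀
        simpa using this
      have h2 : ‖t • ζ‖ = t * ‖ζ‖ := by
        rw [norm_smul, Real.norm_eq_abs, abs_of_nonneg ht]
      linarith
    have htζ : t * ‖ζ‖ = R + ‖x₀‖ + 1 := by
      rw [ht_def, div_mul_cancel₀ _ hζn.ne']
    linarith
  have hkey1 := key ξ hξ hperp
  have hkey2 : ¬ ((∑ l, η i l * (-ξ) l) ≤ 0 ∧ (∑ l, η j l * (-ξ) l) ≤ 0) := by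
    apply key (-ξ) (neg_ne_zero.mpr hξ)
    intro k hki hkj
    simp only [Pi.neg_apply, mul_neg, Finset.sum_neg_distrib]
    rw [hperp k hki hkj]; ring
  have hneg : ∀ m : Fin N, (∑ l, η m l * (-ξ) l) = -(∑ l, η m l * ξ l) := by
    intro m
    simp [mul_neg]
  rw [hneg i, hneg j] at hkey2
  set a := ∑ l, η i l * ξ l
  set b := ∑ l, η j l * ξ l
  have hab : a * b < 0 := by
    push_neg at hkey1 hkey2
    rcases lt_or_ge 0 a with hpa | hna
    · have hb' : b < 0 := by
        by_contra h
        push_neg at h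
        have := hkey2 (by linarith)
        linarith
      exact mul_neg_of_pos_of_neg hpa hb'
    · have hpa : a < 0 := lt_of_le_of_ne hna (by
        intro h
        have hb' := hkey1 h.le
        have := hkey2 (by linarith)
        linarith)
      have hb' : 0 < b := hkey1 hna
      exact mul_neg_of_neg_of_pos hpa hb'
  refine ⟨hab, ?_⟩
  rintro ⟨c, hc, hci, hηi⟩
  have ha : a = ∑ k, c k * ∑ l, η k l * ξ l := by
    have h1 : a = ∑ l, ∑ k, c k * η k l * ξ l := by
      apply Finset.sum_congr rfl
      intro l _
      have := congrFun hηi l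
      simp only [Finset.sum_apply, Pi.smul_apply, smul_eq_mul] at this
      rw [this, Finset.sum_mul]
    rw [h1, Finset.sum_comm]
    apply Finset.sum_congr rfl
    intro k _
    rw [Finset.mul_sum]
    apply Finset.sum_congr rfl
    intro l _
    ring
  have ha2 : a = c j * b := by
    rw [ha]
    rw [Finset.sum_eq_single j]
    · intro k _ hkj
      rcases eq_or_ne k i with rfl | hki
      · rw [hci]; ring
      · rw [hperp k hki hkj]; ring
    · intro h
      exact absurd (Finset.mem_univ j) h
  have hcj := hc j
  rw [ha2] at hab
  nlinarith [mul_nonneg hcj (mul_self_nonneg b)]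
end

section
/- Let $\Delta \subset \mathbb{R}^n$ be a smooth compact polytope and let $\Delta'$ be its blowup along a face $f = F_I$ of codimension at least 2, so $\Delta' = \Delta \cap \{x \mid \langle \eta_0, x \rangle \leq \kappa_0\}$ with $\eta_0 = \sum_{i \in I} \eta_i$ and $\kappa_0 = \sum_{i \in I} \kappa_i - \epsilon$ for small $\epsilon > 0$. Let $F_i, F_j$ be two facets of $\Delta$ with $\{i,j\}$ meeting $I$ in exactly one element. If the span $V$ of $\{\eta_k : k \neq i, j\}$ has codimension 1 and $\eta_i + \eta_j \in V$ (the equivalence condition for $F_i \sim F_j$ in $\Delta$), then in $\Delta'$ the span of the conormals of all facets other than $F_i', F_j'$ (now including $\eta_0$) is all of $\mathbb{R}^n$, so the corresponding facets of $\Delta'$ are not equivalent. -/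
/-- Blowing up along a face `F_I` destroys equivalence of facets `F_i, F_j` when exactly
one of `i, j` lies in `I`: if the conormals of a compact polytope span `ℝⁿ`, the span `V`
of `{η_k : k ≠ i,j}` has codimension 1 (`finrank V = n-1` and `V ≠ ⊤`), and
`ηᵢ + ηⱼ ∈ V` (the equivalence condition for `Fᵢ ∼ Fⱼ`), then adding the conormal
`η₀ = ∑_{k∈I} η_k` of the exceptional divisor makes the span all of `ℝⁿ`, so the
corresponding facets of the blowup are not equivalent. -/
theorem stmt12 (n N : ℕ) (η : Fin N → Fin n → ℝ) (I : Finset (Fin N))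
    (hI : 2 ≤ I.card) (i j : Fin N) (hij : i ≠ j)
    (hone : (i ∈ I ∧ j ∉ I) ∨ (i ∉ I ∧ j ∈ I))
    (hspanall : Submodule.span ℝ (Set.range η) = ⊤)
    (V : Submodule ℝ (Fin n → ℝ))
    (hV : V = Submodule.span ℝ {v | ∃ k, k ≠ i ∧ k ≠ j ∧ v = η k})
    (hcodim : Module.finrank ℝ V = n - 1)
    (hVne : V ≠ ⊤)
    (hsum : η i + η j ∈ V) :
    Submodule.span ℝ
      (insert (∑ k ∈ I, η k) {v | ∃ k, k ≠ i ∧ k ≠ j ∧ v = η k}) = ⊤ := by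
  set S : Set (Fin n → ℝ) := {v | ∃ k, k ≠ i ∧ k ≠ j ∧ v = η k} with hS
  have hSV : ∀ k : Fin N, k ≠ i → k ≠ j → η k ∈ V := by
    intro k hki hkj
    rw [hV]
    exact Submodule.subset_span ⟨k, hki, hkj, rfl⟩
  -- if η i ∈ V (or η j ∈ V) then V = ⊤, contradiction
  have hkey : ∀ k : Fin N, (k = i ∨ k = j) → η k ∉ V := by
    intro k hk hkV
    apply hVne
    have hi : η i ∈ V ∧ η j ∈ V := by
      rcases hk with rfl | rfl
      · exact ⟨hkV, by have := V.sub_mem hsum hkV; simpa using this⟩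
      · exact ⟨by have := V.sub_mem hsum hkV; simpa using this, hkV⟩
    rw [eq_top_iff, ← hspanall, Submodule.span_le]
    rintro _ ⟨m, rfl⟩
    by_cases hmi : m = i
    · exact hmi ▸ hi.1
    by_cases hmj : m = j
    · exact hmj ▸ hi.2
    exact hSV m hmi hmj
  -- η₀ ∉ V
  have h0 : (∑ k ∈ I, η k) ∉ V := by
    intro h0V
    rcases hone with ⟨hiI, hjI⟩ | ⟨hiI, hjI⟩
    · have hrest : (∑ k ∈ I.erase i, η k) ∈ V := by
        refine Submodule.sum_mem V fun k hk => ?_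
        have hki := Finset.ne_of_mem_erase hk
        have hkj : k ≠ j := fun h => hjI (h ▸ Finset.mem_of_mem_erase hk)
        exact hSV k hki hkj
      have : η i ∈ V := by
        have heq : ∑ k ∈ I, η k = η i + ∑ k ∈ I.erase i, η k :=
          (Finset.add_sum_erase I η hiI).symm
        have := V.sub_mem h0V hrest
        rw [heq] at this
        simpa using this
      exact hkey i (Or.inl rfl) this
    · have hrest : (∑ k ∈ I.erase j, η k) ∈ V := by
        refine Submodule.sum_mem V fun k hk => ?_
        have hkj := Finset.ne_of_mem_erase hk
        have hki : k ≠ i := fun h => hiI (h ▸ Finset.mem_of_mem_erase hk)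
        exact hSV k hki hkj
      have : η j ∈ V := by
        have heq : ∑ k ∈ I, η k = η j + ∑ k ∈ I.erase j, η k :=
          (Finset.add_sum_erase I η hjI).symm
        have := V.sub_mem h0V hrest
        rw [heq] at this
        simpa using this
      exact hkey j (Or.inr rfl) this
  -- the big span W strictly contains V
  set W := Submodule.span ℝ (insert (∑ k ∈ I, η k) S) with hW
  have hVW : V < W := by
    constructor
    · rw [hV, hW]
      exact Submodule.span_mono (Set.subset_insert _ _)
    · intro hle
      exact h0 (hle (Submodule.subset_span (Set.mem_insert _ _)))
  have hn : 1 ≤ n := by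
    rcases Nat.eq_zero_or_pos n with rfl | h
    · exact absurd (Subsingleton.elim V ⊤) hVne
    · exact h
  have hlt : Module.finrank ℝ V < Module.finrank ℝ W :=
    Submodule.finrank_lt_finrank_of_lt hVW
  have hWtop : Module.finrank ℝ (Fin n → ℝ) ≤ Module.finrank ℝ W := by
    have : Module.finrank ℝ (Fin n → ℝ) = n := by simp
    omega
  exact Submodule.eq_top_of_finrank_eq (le_antisymm (Submodule.finrank_le W) hWtop)
end
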